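/- arXiv:1105.4088 — 2 statements merged into one kernel-verified Lean document; each statement's English description precedes it below -/
import Mathlib

section
/- Let L̃, L ∈ ℕ₀, let X be a normed space over ℂ, and let x_{-L̃}, …, x_L be elements of X. Suppose that ‖∑_{ℓ=-L̃}^{L} ω^ℓ x_ℓ‖_X = o(|ω|^L) uniformly as ω → 0 within ℂ₊ \ {0}; that is, for every ε > 0 there exists δ > 0 such that for all ω ∈ ℂ₊ with 0 < |ω| < δ one has ‖∑_{ℓ=-L̃}^{L} ω^ℓ x_ℓ‖_X ≤ ε·|ω|^L. Then x_ℓ = 0 for every ℓ ∈ {-L̃, …, L}. (Lemma 3.3: uniqueness of asymptotic expansions.) -/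
/-!
If `m` is the lowest index with `x m ≠ 0`, then `ω ^ (-m) • ∑ ℓ, ω ^ ℓ • x ℓ` is a polynomial
in `ω` with constant term `x m`, so it tends to `x m` as `ω → 0`. On the other hand it is
`o(ω ^ (L - m))` with `L - m ≥ 0`, so it tends to `0`; hence `x m = 0`, a contradiction.
-/

open Finset Filter Topology Asymptotics

section LaurentSum

variable {𝕜 E : Type*} [NontriviallyNormedField 𝕜] [NormedAddCommGroup E] [NormedSpace 𝕜 E]

lemma zpow_neg_smul_sum_zpow_smul {s : Finset ℤ} {x : ℤ → E} {m : ℤ}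
    (hx : ∀ ℓ ∈ s, ℓ < m → x ℓ = 0) {ω : 𝕜} (hω : ω ≠ 0) :
    ω ^ (-m) • ∑ ℓ ∈ s, ω ^ ℓ • x ℓ = ∑ ℓ ∈ s, ω ^ (ℓ - m).toNat • x ℓ := by
  rw [smul_sum]
  refine sum_congr rfl fun ℓ hℓ => ?_
  rcases lt_or_ge ℓ m with hlt | hge
  · simp [hx ℓ hℓ hlt]
  · rw [smul_smul, ← zpow_add₀ hω, ← zpow_natCast, Int.toNat_of_nonneg (by omega), neg_add_eq_sub]

lemma tendsto_zpow_neg_smul_sum_zpow_smul {s : Finset ℤ} {x : ℤ → E} {m : ℤ} (hm : m ∈ s)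
    (hx : ∀ ℓ ∈ s, ℓ < m → x ℓ = 0) :
    Tendsto (fun ω : 𝕜 => ω ^ (-m) • ∑ ℓ ∈ s, ω ^ ℓ • x ℓ) (𝓝[≠] 0) (𝓝 (x m)) := by
  have hcont : Continuous fun ω : 𝕜 => ∑ ℓ ∈ s, ω ^ (ℓ - m).toNat • x ℓ := by fun_prop
  have hzero : ∑ ℓ ∈ s, (0 : 𝕜) ^ (ℓ - m).toNat • x ℓ = x m := by
    refine (sum_eq_single m (fun ℓ hℓ hne => ?_) (absurd hm)).trans (by simp)
    rcases hne.lt_or_gt with hlt | hgt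
    · simp [hx ℓ hℓ hlt]
    · rw [zero_pow (by omega), zero_smul]
  refine (hzero ▸ hcont.tendsto 0).mono_left nhdsWithin_le_nhds |>.congr' ?_
  filter_upwards [self_mem_nhdsWithin] with ω hω
  exact (zpow_neg_smul_sum_zpow_smul hx hω).symm

lemma isBigO_zpow_one_of_nonneg {l : Filter 𝕜} (hl : l ≤ 𝓝 0) {n : ℤ} (hn : 0 ≤ n) :
    (fun ω : 𝕜 => ω ^ n) =O[l] fun _ => (1 : 𝕜) := by
  lift n to ℕ using hn
  simpa using ((continuous_pow n).tendsto (0 : 𝕜)).mono_left hl |>.isBigO_one 𝕜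

theorem eq_zero_of_isLittleO_sum_zpow_smul {l : Filter 𝕜} [l.NeBot] (hl : l ≤ 𝓝[≠] 0)
    {s : Finset ℤ} {x : ℤ → E} {L : ℤ} (hs : ∀ ℓ ∈ s, ℓ ≤ L)
    (h : (fun ω => ∑ ℓ ∈ s, ω ^ ℓ • x ℓ) =o[l] fun ω => ω ^ L) :
    ∀ ℓ ∈ s, x ℓ = 0 := by
  classical
  by_contra! hne
  set S := s.filter (x · ≠ 0)
  have hS : S.Nonempty := by
    obtain ⟨ℓ, hℓ, hxℓ⟩ := hne
    exact ⟨ℓ, mem_filter.2 ⟨hℓ, hxℓ⟩⟩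
  set m := S.min' hS
  obtain ⟨hm, hxm⟩ := mem_filter.1 (S.min'_mem hS)
  have hbelow : ∀ ℓ ∈ s, ℓ < m → x ℓ = 0 := fun ℓ hℓ hlt => by
    by_contra hxℓ
    exact (S.min'_le ℓ (mem_filter.2 ⟨hℓ, hxℓ⟩)).not_gt hlt
  have hlittle : (fun ω => ω ^ (-m) • ∑ ℓ ∈ s, ω ^ ℓ • x ℓ) =o[l] fun ω => ω ^ (L - m) := by
    refine ((isBigO_refl (fun ω : 𝕜 => ω ^ (-m)) l).smul_isLittleO h).congr' .rfl ?_
    filter_upwards [hl self_mem_nhdsWithin] with ω hω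
    rw [smul_eq_mul, ← zpow_add₀ hω, neg_add_eq_sub]
  have htendsto : Tendsto (fun ω => ω ^ (-m) • ∑ ℓ ∈ s, ω ^ ℓ • x ℓ) l (𝓝 0) :=
    isLittleO_one_iff 𝕜 |>.1 <| hlittle.trans_isBigO <|
      isBigO_zpow_one_of_nonneg (hl.trans nhdsWithin_le_nhds) (by linarith [hs m hm])
  exact hxm <| tendsto_nhds_unique
    ((tendsto_zpow_neg_smul_sum_zpow_smul hm hbelow).mono_left hl) htendsto

end LaurentSum

/-- Lemma 3.3 (uniqueness of asymptotic expansions): if the finite Laurent-type sum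
`∑_{ℓ=-Lt}^{L} ω^ℓ • x ℓ` is `o(|ω|^L)` uniformly as `ω → 0` within the closed upper
half plane minus the origin, then all coefficients `x ℓ` vanish. -/
theorem uniqueness_of_asymptotic_expansions
    (Lt L : ℕ) {X : Type*} [NormedAddCommGroup X] [NormedSpace ℂ X]
    (x : ℤ → X)
    (h : ∀ ε : ℝ, 0 < ε → ∃ δ : ℝ, 0 < δ ∧ ∀ ω : ℂ, 0 ≤ ω.im → 0 < ‖ω‖ → ‖ω‖ < δ →
      ‖∑ ℓ ∈ Finset.Icc (-(Lt : ℤ)) (L : ℤ), ω ^ ℓ • x ℓ‖ ≤ ε * ‖ω‖ ^ (L : ℕ)) :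
    ∀ ℓ ∈ Finset.Icc (-(Lt : ℤ)) (L : ℤ), x ℓ = 0 := by
  set H := {ω : ℂ | 0 < ω.im}
  have hH : 𝓝[H] 0 ≤ 𝓝[≠] 0 := nhdsWithin_mono 0 fun ω hω hω0 => by simp_all [H]
  have : (𝓝[H] (0 : ℂ)).NeBot := mem_closure_iff_nhdsWithin_neBot.1 (by simp [H])
  refine eq_zero_of_isLittleO_sum_zpow_smul hH (fun ℓ hℓ => (mem_Icc.1 hℓ).2) <|
    IsLittleO.of_bound fun ε hε => ?_
  obtain ⟨δ, hδ, hbound⟩ := h ε hε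
  filter_upwards [self_mem_nhdsWithin, nhdsWithin_le_nhds (Metric.ball_mem_nhds 0 hδ)]
    with ω hωH hωδ
  have hω0 : ω ≠ 0 := fun h0 => by simp [H, h0] at hωH
  simpa using hbound ω hωH.le (norm_pos_iff.2 hω0) (by simpa using hωδ)
end

section
/- Let N ≥ 3 be an odd natural number, and let s, t ∈ ℝ satisfy s > 1/2, t < -1/2 and t ≤ s - (N+1)/2. Then there exists a constant C > 0 such that for every measurable function f : ℝ^N → ℂ with ∫_{ℝ^N} (1+|y|²)^s |f(y)|² dy < ∞, the integral (Tf)(x) = ∫_{ℝ^N} |x-y|^{1-N} f(y) dy converges absolutely for almost every x ∈ ℝ^N and satisfies ∫_{ℝ^N} (1+|x|²)^t |(Tf)(x)|² dx ≤ C² · ∫_{ℝ^N} (1+|y|²)^s |f(y)|² dy. In other words, the integral operator with kernel |x-y|^{1-N} is a bounded linear operator from L²_s(ℝ^N) to L²_t(ℝ^N). (The J = 0 case of the kernel boundedness established in the proof of Lemma 3.15.) -/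
/-!
Schur test with the weights `⟨x⟩ = √(1 + ‖x‖²)`. The key estimate is
`∫ ⟨y⟩^(-b) ‖x - y‖^(-α) dy ≲ ⟨x⟩^(d - α - b)` for `0 ≤ α, b < d < α + b`: with `ρ = ⟨x⟩ / 2`,
one has `⟨y⟩ ≥ ρ` on `ball x ρ`, `‖x - y‖ ≥ ρ` on `ball 0 ρ \ ball x ρ`, and `‖x - y‖ ≤ 3 ⟨y⟩`
on the rest, so each piece is bounded by a radial power integral over the unit ball or its
complement, rescaled to radius `ρ`.
Cauchy–Schwarz with the splitting `1 = ⟨y⟩^(-a) ⟨y⟩^a` and the key estimate (exponent `a`) give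
`|Tf(x)|² ≲ ⟨x⟩^(d - α - a) ∫ ‖x - y‖^(-α) ⟨y⟩^a |f(y)|² dy`. Integrating against
`⟨x⟩^(2t) ≤ ⟨x⟩^(-b - (d - α - a))`, swapping the integrals and using the key estimate again
(exponent `b`) leaves the weight `⟨y⟩^(a + d - α - b) ≤ ⟨y⟩^(2s)`. For `α = N - 1`,
`a = 3/2` and `b = min (1/2 - 2t) (N - 1/2)` meet all constraints.
-/

open MeasureTheory Metric Set Module
open scoped ENNReal Pointwise

theorem ofReal_rpow_mul_ofReal_rpow_mul {ρ : ℝ} (hρ : 0 < ρ) (a c : ℝ) (I : ℝ≥0∞) :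
    ENNReal.ofReal (ρ ^ a) * (ENNReal.ofReal (ρ ^ c) * I) = ENNReal.ofReal (ρ ^ (a + c)) * I := by
  rw [← mul_assoc, ← ENNReal.ofReal_mul (by positivity), ← Real.rpow_add hρ]

noncomputable def japaneseBracket {E : Type*} [Norm E] (x : E) : ℝ := √(1 + ‖x‖ ^ 2)

section JapaneseBracket

variable {E : Type*} [SeminormedAddCommGroup E]

theorem one_le_japaneseBracket (x : E) : 1 ≤ japaneseBracket x :=
  Real.one_le_sqrt.2 (by simp only [le_add_iff_nonneg_right]; positivity)

theorem japaneseBracket_pos (x : E) : 0 < japaneseBracket x :=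
  one_pos.trans_le (one_le_japaneseBracket x)

theorem norm_le_japaneseBracket (x : E) : ‖x‖ ≤ japaneseBracket x :=
  Real.le_sqrt_of_sq_le (by linarith)

theorem sq_japaneseBracket (x : E) : japaneseBracket x ^ 2 = 1 + ‖x‖ ^ 2 :=
  Real.sq_sqrt (by positivity)

theorem japaneseBracket_le_add_norm_sub (x y : E) :
    japaneseBracket x ≤ japaneseBracket y + ‖x - y‖ := by
  have hxy : ‖x‖ ≤ ‖y‖ + ‖x - y‖ := by simpa using norm_add_le y (x - y)
  have hpos : 0 ≤ japaneseBracket y + ‖x - y‖ := by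
    have := japaneseBracket_pos y; positivity
  refine abs_le_of_sq_le_sq' ?_ hpos |>.2
  rw [sq_japaneseBracket, add_sq, sq_japaneseBracket]
  nlinarith [pow_le_pow_left₀ (norm_nonneg x) hxy 2,
    mul_le_mul_of_nonneg_right (norm_le_japaneseBracket y) (norm_nonneg (x - y))]

theorem rpow_one_add_norm_sq_eq_japaneseBracket_rpow (x : E) (s : ℝ) :
    (1 + ‖x‖ ^ 2) ^ s = japaneseBracket x ^ (2 * s) := by
  rw [Real.rpow_mul (japaneseBracket_pos x).le, ← sq_japaneseBracket, Real.rpow_two]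

@[fun_prop]
theorem continuous_japaneseBracket : Continuous (japaneseBracket : E → ℝ) := by
  unfold japaneseBracket; fun_prop

theorem measurable_ofReal_japaneseBracket_rpow [MeasurableSpace E] [OpensMeasurableSpace E]
    (e : ℝ) :
    Measurable fun x : E => ENNReal.ofReal (japaneseBracket x ^ e) :=
  (continuous_japaneseBracket.measurable.pow_const e).ennreal_ofReal

theorem ofReal_japaneseBracket_rpow_mul_le (x : E) {u v w : ℝ} (h : u + v ≤ w) (C : ℝ≥0∞) :
    ENNReal.ofReal (japaneseBracket x ^ u) * (C * ENNReal.ofReal (japaneseBracket x ^ v))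
      ≤ C * ENNReal.ofReal (japaneseBracket x ^ w) := by
  rw [mul_left_comm, ← ENNReal.ofReal_mul (Real.rpow_nonneg (japaneseBracket_pos x).le _),
    ← Real.rpow_add (japaneseBracket_pos x)]
  exact mul_le_mul_right (ENNReal.ofReal_le_ofReal
    (Real.rpow_le_rpow_of_exponent_le (one_le_japaneseBracket x) h)) C

end JapaneseBracket

section SchurTest

variable {X Y : Type*} [MeasurableSpace X] [MeasurableSpace Y] {μ : Measure X} {ν : Measure Y}

theorem ENNReal.sq_lintegral_le_lintegral_mul_lintegral {F u v : Y → ℝ≥0∞} (hu : AEMeasurable u ν)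
    (hv : AEMeasurable v ν) (h : ∀ y, F y ^ 2 ≤ u y * v y) :
    (∫⁻ y, F y ∂ν) ^ 2 ≤ (∫⁻ y, u y ∂ν) * ∫⁻ y, v y ∂ν := by
  have hsqrt : ∀ a : ℝ≥0∞, (a ^ (1 / 2 : ℝ)) ^ (2 : ℝ) = a := fun a => by
    rw [← ENNReal.rpow_mul]; norm_num
  have hF : ∀ y, F y ≤ u y ^ (1 / 2 : ℝ) * v y ^ (1 / 2 : ℝ) := fun y => by
    rw [← ENNReal.mul_rpow_of_nonneg _ _ (by norm_num)]
    calc F y = (F y ^ 2) ^ (1 / 2 : ℝ) := by rw [← ENNReal.rpow_two, ← ENNReal.rpow_mul]; norm_num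
      _ ≤ (u y * v y) ^ (1 / 2 : ℝ) := ENNReal.rpow_le_rpow (h y) (by norm_num)
  have hHolder := ENNReal.lintegral_mul_le_Lp_mul_Lq ν Real.HolderConjugate.two_two
    (hu.pow_const (1 / 2 : ℝ)) (hv.pow_const (1 / 2 : ℝ))
  simp only [Pi.mul_apply, hsqrt] at hHolder
  calc (∫⁻ y, F y ∂ν) ^ 2
      ≤ ((∫⁻ y, u y ∂ν) ^ (1 / 2 : ℝ) * (∫⁻ y, v y ∂ν) ^ (1 / 2 : ℝ)) ^ 2 :=
        pow_le_pow_left' ((lintegral_mono hF).trans hHolder) 2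
    _ = _ := by rw [mul_pow, ← ENNReal.rpow_two, ← ENNReal.rpow_two, hsqrt, hsqrt]

theorem lintegral_mul_sq_lintegral_le_of_schur [SFinite μ] [SFinite ν] {K : X → Y → ℝ≥0∞}
    (hK : Measurable (Function.uncurry K)) {p q g W : Y → ℝ≥0∞} (hp : Measurable p)
    (hq : Measurable q) (hg : Measurable g) (hW : Measurable W) (hpq : ∀ y, p y * q y = 1)
    {v w : X → ℝ≥0∞} (hw : Measurable w) {A B : ℝ≥0∞}
    (h₁ : ∀ x, v x * ∫⁻ y, K x y * p y ∂ν ≤ A * w x)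
    (h₂ : ∀ y, q y * ∫⁻ x, w x * K x y ∂μ ≤ B * W y) :
    ∫⁻ x, v x * (∫⁻ y, K x y * g y ∂ν) ^ 2 ∂μ ≤ A * B * ∫⁻ y, W y * g y ^ 2 ∂ν := by
  set Q : Y → ℝ≥0∞ := fun y => q y * g y ^ 2
  have hQ : Measurable Q := hq.mul (hg.pow_const 2)
  have hKx : ∀ x, Measurable (K x) := fun x => hK.comp measurable_prodMk_left
  have hwKQ : Measurable (Function.uncurry fun x y => w x * K x y * Q y) :=
    ((hw.comp measurable_fst).mul hK).mul (hQ.comp measurable_snd)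
  have hCS : ∀ x, (∫⁻ y, K x y * g y ∂ν) ^ 2
      ≤ (∫⁻ y, K x y * p y ∂ν) * ∫⁻ y, K x y * Q y ∂ν := fun x =>
    ENNReal.sq_lintegral_le_lintegral_mul_lintegral ((hKx x).mul hp).aemeasurable
      ((hKx x).mul hQ).aemeasurable fun y => le_of_eq <|
        calc (K x y * g y) ^ 2 = (K x y * g y) ^ 2 * (p y * q y) := by rw [hpq, mul_one]
          _ = _ := by ring
  calc ∫⁻ x, v x * (∫⁻ y, K x y * g y ∂ν) ^ 2 ∂μ
      ≤ ∫⁻ x, A * ∫⁻ y, w x * K x y * Q y ∂ν ∂μ := by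
        refine lintegral_mono fun x => ?_
        calc v x * (∫⁻ y, K x y * g y ∂ν) ^ 2
            ≤ (v x * ∫⁻ y, K x y * p y ∂ν) * ∫⁻ y, K x y * Q y ∂ν := by
              rw [mul_assoc]; gcongr; exact hCS x
          _ ≤ A * w x * ∫⁻ y, K x y * Q y ∂ν := mul_le_mul_left (h₁ x) _
          _ = A * ∫⁻ y, w x * K x y * Q y ∂ν := by
              rw [mul_assoc, ← lintegral_const_mul (w x) (f := fun y => K x y * Q y)
                ((hKx x).mul hQ)]
              simp only [mul_assoc]
    _ = A * ∫⁻ y, (q y * ∫⁻ x, w x * K x y ∂μ) * g y ^ 2 ∂ν := by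
        rw [lintegral_const_mul _ hwKQ.lintegral_prod_right,
          lintegral_lintegral_swap hwKQ.aemeasurable]
        congr 1
        refine lintegral_congr fun y => ?_
        rw [lintegral_mul_const (Q y) (f := fun x => w x * K x y)
          (hw.mul (hK.comp measurable_prodMk_right))]
        ring
    _ ≤ A * ∫⁻ y, B * W y * g y ^ 2 ∂ν :=
        mul_le_mul_right (lintegral_mono fun y => mul_le_mul_left (h₂ y) _) A
    _ = A * B * ∫⁻ y, W y * g y ^ 2 ∂ν := by
        rw [mul_assoc, ← lintegral_const_mul B (f := fun y => W y * g y ^ 2)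
          (hW.mul (hg.pow_const 2))]
        simp only [mul_assoc]

end SchurTest

section IntegralOperator

variable {X Y G : Type*} [MeasurableSpace X] [MeasurableSpace Y] {μ : Measure X} {ν : Measure Y}
  [NormedAddCommGroup G] {F : X → Y → G}

theorem ae_integrable_of_lintegral_mul_sq_lintegral_enorm_ne_top [SFinite ν]
    (hF : AEStronglyMeasurable (Function.uncurry F) (μ.prod ν)) {v : X → ℝ≥0∞}
    (hv : AEMeasurable v μ) (hv0 : ∀ x, v x ≠ 0)
    (hfin : ∫⁻ x, v x * (∫⁻ y, ‖F x y‖ₑ ∂ν) ^ 2 ∂μ ≠ ∞) :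
    ∀ᵐ x ∂μ, Integrable (F x) ν := by
  have hT : AEMeasurable (fun x => ∫⁻ y, ‖F x y‖ₑ ∂ν) μ := hF.enorm.lintegral_prod_right'
  filter_upwards [ae_lt_top' (hv.mul (hT.pow_const 2)) hfin, hF.prodMk_left] with x hx hFx
  refine ⟨hFx, lt_top_iff_ne_top.2 fun hTx => ?_⟩
  simp [hTx, ENNReal.mul_top (hv0 x)] at hx

theorem integral_mul_norm_integral_sq_le_toReal [NormedSpace ℝ G] {v : X → ℝ} (hv : ∀ x, 0 ≤ v x)
    (hfin : ∫⁻ x, ENNReal.ofReal (v x) * (∫⁻ y, ‖F x y‖ₑ ∂ν) ^ 2 ∂μ ≠ ∞) :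
    ∫ x, v x * ‖∫ y, F x y ∂ν‖ ^ 2 ∂μ
      ≤ (∫⁻ x, ENNReal.ofReal (v x) * (∫⁻ y, ‖F x y‖ₑ ∂ν) ^ 2 ∂μ).toReal := by
  by_cases hint : Integrable (fun x => v x * ‖∫ y, F x y ∂ν‖ ^ 2) μ
  · rw [integral_eq_lintegral_of_nonneg_ae (ae_of_all _ fun x => by have := hv x; positivity)
      hint.aestronglyMeasurable]
    refine ENNReal.toReal_mono hfin (lintegral_mono fun x => ?_)
    rw [ENNReal.ofReal_mul (hv x), ENNReal.ofReal_pow (norm_nonneg _), ofReal_norm]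
    gcongr
    exact enorm_integral_le_lintegral_enorm _
  · rw [integral_undef hint]
    exact ENNReal.toReal_nonneg

end IntegralOperator

section HaarMeasure

variable {E : Type*} [NormedAddCommGroup E] [NormedSpace ℝ E] [FiniteDimensional ℝ E]
  [MeasurableSpace E] [BorelSpace E] (μ : Measure E) [μ.IsAddHaarMeasure]

theorem setLIntegral_smul_set_norm_rpow {r : ℝ} (hr : 0 < r) (p : ℝ) (s : Set E) :
    ∫⁻ y in r • s, ENNReal.ofReal (‖y‖ ^ p) ∂μ
      = ENNReal.ofReal (r ^ (finrank ℝ E + p)) * ∫⁻ y in s, ENNReal.ofReal (‖y‖ ^ p) ∂μ := by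
  set φ := (Homeomorph.smulOfNeZero (α := E) r hr.ne').toMeasurableEquiv
  have hμ : μ = ENNReal.ofReal (r ^ finrank ℝ E) • Measure.map φ μ := by
    rw [show ⇑φ = (r • ·) from rfl, Measure.map_addHaar_smul μ hr.ne', smul_smul,
      ← ENNReal.ofReal_mul (by positivity), abs_of_pos (by positivity),
      mul_inv_cancel₀ (by positivity), ENNReal.ofReal_one, one_smul]
  have hpre : φ ⁻¹' (r • s) = s := by
    change (r • ·) ⁻¹' (r • s) = s
    rw [preimage_smul₀ hr.ne', inv_smul_smul₀ hr.ne']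
  conv_lhs => rw [hμ]
  rw [Measure.restrict_smul, lintegral_smul_measure, φ.restrict_map, lintegral_map_equiv, hpre,
    smul_eq_mul, ← lintegral_const_mul' _ _ ENNReal.ofReal_ne_top,
    ← lintegral_const_mul' _ _ ENNReal.ofReal_ne_top]
  refine lintegral_congr fun y => ?_
  change _ * ENNReal.ofReal (‖r • y‖ ^ p) = _
  rw [norm_smul, Real.norm_of_nonneg hr.le, Real.mul_rpow hr.le (norm_nonneg y),
    Real.rpow_add hr, Real.rpow_natCast, ENNReal.ofReal_mul (by positivity),
    ENNReal.ofReal_mul (by positivity), mul_assoc]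

theorem setLIntegral_ball_norm_sub_rpow (x : E) {r : ℝ} (hr : 0 < r) (p : ℝ) :
    ∫⁻ y in ball x r, ENNReal.ofReal (‖x - y‖ ^ p) ∂μ
      = ENNReal.ofReal (r ^ (finrank ℝ E + p)) * ∫⁻ y in ball 0 1, ENNReal.ofReal (‖y‖ ^ p) ∂μ := by
  have hball : (x - ·) ⁻¹' (r • ball (0 : E) 1) = ball x r := by
    ext y; simp [smul_unitBall_of_pos hr, dist_eq_norm, norm_sub_rev]
  rw [← hball, ← setLIntegral_smul_set_norm_rpow μ hr]
  exact (μ.measurePreserving_sub_left x).setLIntegral_comp_preimage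
    (measurableSet_ball.const_smul₀ r) (measurable_norm.pow_const p).ennreal_ofReal

theorem setLIntegral_compl_ball_norm_sub_rpow (x : E) {r : ℝ} (hr : 0 < r) (p : ℝ) :
    ∫⁻ y in (ball x r)ᶜ, ENNReal.ofReal (‖x - y‖ ^ p) ∂μ
      = ENNReal.ofReal (r ^ (finrank ℝ E + p))
        * ∫⁻ y in (ball 0 1)ᶜ, ENNReal.ofReal (‖y‖ ^ p) ∂μ := by
  have hball : (x - ·) ⁻¹' (r • (ball (0 : E) 1)ᶜ) = (ball x r)ᶜ := by
    rw [compl_eq_univ_sdiff, smul_set_sdiff₀ hr.ne', smul_set_univ₀ hr.ne',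
      smul_unitBall_of_pos hr, ← compl_eq_univ_sdiff]
    ext y; simp [dist_eq_norm, norm_sub_rev]
  rw [← hball, ← setLIntegral_smul_set_norm_rpow μ hr]
  exact (μ.measurePreserving_sub_left x).setLIntegral_comp_preimage
    (measurableSet_ball.compl.const_smul₀ r) (measurable_norm.pow_const p).ennreal_ofReal

theorem setLIntegral_unitBall_norm_rpow_lt_top [Nontrivial E] {p : ℝ}
    (hp : -(finrank ℝ E : ℝ) < p) :
    ∫⁻ y in ball 0 1, ENNReal.ofReal (‖y‖ ^ p) ∂μ < ∞ := by
  refine Integrable.lintegral_lt_top (integrableOn_ball_of_norm_le_rpow (C := 1) (α := -p)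
    finrank_pos (by linarith) (ae_of_all _ fun y => ?_)
    (measurable_norm.pow_const p).aestronglyMeasurable)
  simp [abs_of_nonneg (Real.rpow_nonneg (norm_nonneg y) p)]

theorem setLIntegral_compl_unitBall_norm_rpow_lt_top {p : ℝ} (hp : p < -(finrank ℝ E : ℝ)) :
    ∫⁻ y in (ball 0 1)ᶜ, ENNReal.ofReal (‖y‖ ^ p) ∂μ < ∞ := by
  have hdom : ∀ y ∈ (ball (0 : E) 1)ᶜ, ENNReal.ofReal (‖y‖ ^ p)
      ≤ ENNReal.ofReal (2 ^ (-p)) * ENNReal.ofReal ((1 + ‖y‖) ^ (-(-p))) := by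
    intro y hy
    have hy1 : 1 ≤ ‖y‖ := by simpa using hy
    rw [← ENNReal.ofReal_mul (by positivity), neg_neg, Real.rpow_neg zero_le_two,
      ← Real.inv_rpow zero_le_two, ← Real.mul_rpow (by norm_num) (by positivity)]
    refine ENNReal.ofReal_le_ofReal (Real.rpow_le_rpow_of_nonpos (by positivity) ?_ (by linarith))
    linarith
  calc ∫⁻ y in (ball 0 1)ᶜ, ENNReal.ofReal (‖y‖ ^ p) ∂μ
      ≤ ∫⁻ y, ENNReal.ofReal (2 ^ (-p)) * ENNReal.ofReal ((1 + ‖y‖) ^ (-(-p))) ∂μ :=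
        (setLIntegral_mono' measurableSet_ball.compl hdom).trans (setLIntegral_le_lintegral _ _)
    _ < ∞ := by
        rw [lintegral_const_mul' _ _ ENNReal.ofReal_ne_top]
        exact ENNReal.mul_lt_top ENNReal.ofReal_lt_top
          (integrable_one_add_norm (μ := μ) (by linarith)).lintegral_lt_top

section Regions

variable {α b ρ : ℝ} (x : E)

theorem setLIntegral_ball_japaneseBracket_rpow_mul_norm_sub_rpow_le (hb : 0 ≤ b) (hρ : 0 < ρ)
    (hρx : 2 * ρ ≤ japaneseBracket x) :
    ∫⁻ y in ball x ρ, ENNReal.ofReal (japaneseBracket y ^ (-b)) * ENNReal.ofReal (‖x - y‖ ^ (-α)) ∂μ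
      ≤ ENNReal.ofReal (ρ ^ (finrank ℝ E - α - b))
        * ∫⁻ y in ball 0 1, ENNReal.ofReal (‖y‖ ^ (-α)) ∂μ := by
  have hle : ∀ y ∈ ball x ρ, ENNReal.ofReal (japaneseBracket y ^ (-b))
      ≤ ENNReal.ofReal (ρ ^ (-b)) := by
    intro y hy
    have hxy : ‖x - y‖ < ρ := by rwa [mem_ball, dist_eq_norm, norm_sub_rev] at hy
    have := japaneseBracket_le_add_norm_sub x y
    exact ENNReal.ofReal_le_ofReal (Real.rpow_le_rpow_of_nonpos hρ (by linarith) (by linarith))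
  calc _ ≤ ∫⁻ y in ball x ρ, ENNReal.ofReal (ρ ^ (-b)) * ENNReal.ofReal (‖x - y‖ ^ (-α)) ∂μ :=
        setLIntegral_mono' measurableSet_ball fun y hy => mul_le_mul_left (hle y hy) _
    _ = _ := by
        rw [lintegral_const_mul' _ _ ENNReal.ofReal_ne_top,
          setLIntegral_ball_norm_sub_rpow μ x hρ, ofReal_rpow_mul_ofReal_rpow_mul hρ]
        ring_nf

theorem setLIntegral_compl_ball_inter_ball_japaneseBracket_rpow_mul_norm_sub_rpow_le [Nontrivial E]
    (hα : 0 ≤ α) (hb : 0 ≤ b) (hρ : 0 < ρ) :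
    ∫⁻ y in (ball x ρ)ᶜ ∩ ball 0 ρ,
        ENNReal.ofReal (japaneseBracket y ^ (-b)) * ENNReal.ofReal (‖x - y‖ ^ (-α)) ∂μ
      ≤ ENNReal.ofReal (ρ ^ (finrank ℝ E - α - b))
        * ∫⁻ y in ball 0 1, ENNReal.ofReal (‖y‖ ^ (-b)) ∂μ := by
  have hle : ∀ᵐ y ∂μ, y ∈ (ball x ρ)ᶜ ∩ ball 0 ρ →
      ENNReal.ofReal (japaneseBracket y ^ (-b)) * ENNReal.ofReal (‖x - y‖ ^ (-α))
        ≤ ENNReal.ofReal (ρ ^ (-α)) * ENNReal.ofReal (‖0 - y‖ ^ (-b)) := by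
    -- `‖y‖ ^ (-b)` is the junk value `0` at `y = 0` (for `b ≠ 0`), hence only almost everywhere.
    filter_upwards [μ.ae_ne 0] with y hy0 hy
    have hxy : ρ ≤ ‖x - y‖ := by simpa [dist_eq_norm, norm_sub_rev] using hy.1
    rw [mul_comm, zero_sub, norm_neg]
    exact mul_le_mul' (ENNReal.ofReal_le_ofReal (Real.rpow_le_rpow_of_nonpos hρ hxy (by linarith)))
      (ENNReal.ofReal_le_ofReal (Real.rpow_le_rpow_of_nonpos (norm_pos_iff.2 hy0)
        (norm_le_japaneseBracket y) (by linarith)))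
  calc _ ≤ ∫⁻ y in ball 0 ρ, ENNReal.ofReal (ρ ^ (-α)) * ENNReal.ofReal (‖0 - y‖ ^ (-b)) ∂μ :=
        (setLIntegral_mono_ae (by fun_prop) hle).trans (lintegral_mono_set inter_subset_right)
    _ = _ := by
        rw [lintegral_const_mul' _ _ ENNReal.ofReal_ne_top,
          setLIntegral_ball_norm_sub_rpow μ 0 hρ, ofReal_rpow_mul_ofReal_rpow_mul hρ]
        ring_nf

theorem setLIntegral_compl_ball_diff_ball_japaneseBracket_rpow_mul_norm_sub_rpow_le
    (hb : 0 ≤ b) (hρ : 0 < ρ) (hxρ : ‖x‖ ≤ 2 * ρ) :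
    ∫⁻ y in (ball x ρ)ᶜ \ ball 0 ρ,
        ENNReal.ofReal (japaneseBracket y ^ (-b)) * ENNReal.ofReal (‖x - y‖ ^ (-α)) ∂μ
      ≤ ENNReal.ofReal (ρ ^ (finrank ℝ E - α - b))
        * (ENNReal.ofReal (3 ^ b) * ∫⁻ y in (ball 0 1)ᶜ, ENNReal.ofReal (‖y‖ ^ (-(α + b))) ∂μ) := by
  have hle : ∀ y ∈ (ball x ρ)ᶜ \ ball 0 ρ,
      ENNReal.ofReal (japaneseBracket y ^ (-b)) * ENNReal.ofReal (‖x - y‖ ^ (-α))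
        ≤ ENNReal.ofReal (3 ^ b) * ENNReal.ofReal (‖x - y‖ ^ (-(α + b))) := by
    intro y hy
    have hxy : ρ ≤ ‖x - y‖ := by simpa [dist_eq_norm, norm_sub_rev] using hy.1
    have hyρ : ρ ≤ ‖y‖ := by simpa using hy.2
    have h3 : ‖x - y‖ / 3 ≤ japaneseBracket y := by
      linarith [norm_sub_le x y, norm_le_japaneseBracket y]
    have hpos : 0 < ‖x - y‖ := hρ.trans_le hxy
    have hbr : japaneseBracket y ^ (-b) ≤ 3 ^ b * ‖x - y‖ ^ (-b) := by
      calc japaneseBracket y ^ (-b) ≤ (‖x - y‖ / 3) ^ (-b) :=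
            Real.rpow_le_rpow_of_nonpos (div_pos hpos three_pos) h3 (by linarith)
        _ = 3 ^ b * ‖x - y‖ ^ (-b) := by
            rw [Real.div_rpow hpos.le (by norm_num), Real.rpow_neg (by norm_num : (0:ℝ) ≤ 3),
              div_inv_eq_mul, mul_comm]
    rw [← ENNReal.ofReal_mul (Real.rpow_nonneg (japaneseBracket_pos y).le _),
      ← ENNReal.ofReal_mul (by positivity)]
    refine ENNReal.ofReal_le_ofReal ?_
    calc _ ≤ 3 ^ b * ‖x - y‖ ^ (-b) * ‖x - y‖ ^ (-α) :=
          mul_le_mul_of_nonneg_right hbr (by positivity)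
      _ = _ := by rw [mul_assoc, ← Real.rpow_add hpos, neg_add, add_comm]
  calc _ ≤ ∫⁻ y in (ball x ρ)ᶜ, ENNReal.ofReal (3 ^ b) * ENNReal.ofReal (‖x - y‖ ^ (-(α + b))) ∂μ :=
        (setLIntegral_mono' (measurableSet_ball.compl.diff measurableSet_ball) hle).trans
          (lintegral_mono_set sdiff_subset)
    _ = _ := by
        rw [lintegral_const_mul' _ _ ENNReal.ofReal_ne_top,
          setLIntegral_compl_ball_norm_sub_rpow μ x hρ, mul_left_comm]
        ring_nf

end Regions

theorem exists_lintegral_japaneseBracket_rpow_mul_norm_sub_rpow_le {α b : ℝ} (hα : 0 ≤ α)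
    (hαd : α < finrank ℝ E) (hb : 0 ≤ b) (hbd : b < finrank ℝ E) (hαb : finrank ℝ E < α + b) :
    ∃ C : ℝ≥0∞, C ≠ ∞ ∧ ∀ x : E,
      ∫⁻ y, ENNReal.ofReal (japaneseBracket y ^ (-b)) * ENNReal.ofReal (‖x - y‖ ^ (-α)) ∂μ
        ≤ C * ENNReal.ofReal (japaneseBracket x ^ (finrank ℝ E - α - b)) := by
  have : Nontrivial E :=
    Module.nontrivial_of_finrank_pos (R := ℝ) (by exact_mod_cast hb.trans_lt hbd)
  set e : ℝ := finrank ℝ E - α - b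
  set I := ∫⁻ y in ball 0 1, ENNReal.ofReal (‖y‖ ^ (-α)) ∂μ
    + ∫⁻ y in ball 0 1, ENNReal.ofReal (‖y‖ ^ (-b)) ∂μ
    + ENNReal.ofReal (3 ^ b) * ∫⁻ y in (ball 0 1)ᶜ, ENNReal.ofReal (‖y‖ ^ (-(α + b))) ∂μ
  have hI : I ≠ ∞ := by
    refine ENNReal.add_ne_top.2 ⟨ENNReal.add_ne_top.2 ⟨?_, ?_⟩, ?_⟩
    · exact (setLIntegral_unitBall_norm_rpow_lt_top μ (by linarith)).ne
    · exact (setLIntegral_unitBall_norm_rpow_lt_top μ (by linarith)).ne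
    · exact ENNReal.mul_ne_top ENNReal.ofReal_ne_top
        (setLIntegral_compl_unitBall_norm_rpow_lt_top μ (by linarith)).ne
  refine ⟨ENNReal.ofReal (2 ^ (-e)) * I, ENNReal.mul_ne_top ENNReal.ofReal_ne_top hI, fun x => ?_⟩
  set ρ := japaneseBracket x / 2
  have hρ : 0 < ρ := half_pos (japaneseBracket_pos x)
  have h2ρ : 2 * ρ = japaneseBracket x := mul_div_cancel₀ _ two_ne_zero
  have hρe : ρ ^ e = 2 ^ (-e) * japaneseBracket x ^ e := by
    rw [Real.div_rpow (japaneseBracket_pos x).le zero_le_two, Real.rpow_neg zero_le_two,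
      div_eq_inv_mul]
  set F := fun y => ENNReal.ofReal (japaneseBracket y ^ (-b)) * ENNReal.ofReal (‖x - y‖ ^ (-α))
  calc ∫⁻ y, F y ∂μ
      = ∫⁻ y in ball x ρ, F y ∂μ + (∫⁻ y in (ball x ρ)ᶜ ∩ ball 0 ρ, F y ∂μ
          + ∫⁻ y in (ball x ρ)ᶜ \ ball 0 ρ, F y ∂μ) := by
        rw [lintegral_inter_add_sdiff _ _ measurableSet_ball,
          lintegral_add_compl _ measurableSet_ball]
    _ ≤ ENNReal.ofReal (ρ ^ e) * I := by
        rw [← add_assoc, mul_add, mul_add]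
        gcongr
        · exact setLIntegral_ball_japaneseBracket_rpow_mul_norm_sub_rpow_le μ x hb hρ h2ρ.le
        · exact setLIntegral_compl_ball_inter_ball_japaneseBracket_rpow_mul_norm_sub_rpow_le μ x
            hα hb hρ
        · exact setLIntegral_compl_ball_diff_ball_japaneseBracket_rpow_mul_norm_sub_rpow_le μ x
            hb hρ (h2ρ ▸ norm_le_japaneseBracket x)
    _ = _ := by
        rw [hρe, ENNReal.ofReal_mul (by positivity)]
        ring

theorem exists_lintegral_one_add_norm_sq_rpow_mul_sq_lintegral_norm_sub_rpow_le {α a b s t : ℝ}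
    (hα : 0 ≤ α) (hαd : α < finrank ℝ E) (ha : 0 ≤ a) (had : a < finrank ℝ E)
    (hαa : finrank ℝ E < α + a) (hb : 0 ≤ b) (hbd : b < finrank ℝ E) (hαb : finrank ℝ E < α + b)
    (ht : 2 * t + (finrank ℝ E - α - a) ≤ -b) (hs : a + (finrank ℝ E - α - b) ≤ 2 * s) :
    ∃ C : ℝ≥0∞, C ≠ ∞ ∧ ∀ g : E → ℝ≥0∞, Measurable g →
      ∫⁻ x, ENNReal.ofReal ((1 + ‖x‖ ^ 2) ^ t)
          * (∫⁻ y, ENNReal.ofReal (‖x - y‖ ^ (-α)) * g y ∂μ) ^ 2 ∂μ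
        ≤ C * ∫⁻ y, ENNReal.ofReal ((1 + ‖y‖ ^ 2) ^ s) * g y ^ 2 ∂μ := by
  obtain ⟨C₁, hC₁, hK₁⟩ :=
    exists_lintegral_japaneseBracket_rpow_mul_norm_sub_rpow_le μ hα hαd ha had hαa
  obtain ⟨C₂, hC₂, hK₂⟩ :=
    exists_lintegral_japaneseBracket_rpow_mul_norm_sub_rpow_le μ hα hαd hb hbd hαb
  refine ⟨C₁ * C₂, ENNReal.mul_ne_top hC₁ hC₂, fun g hg => ?_⟩
  simp_rw [rpow_one_add_norm_sq_eq_japaneseBracket_rpow]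
  refine lintegral_mul_sq_lintegral_le_of_schur
    (((measurable_fst.sub measurable_snd).norm.pow_const _).ennreal_ofReal)
    (measurable_ofReal_japaneseBracket_rpow (-a)) (measurable_ofReal_japaneseBracket_rpow a) hg
    (measurable_ofReal_japaneseBracket_rpow _) (fun y => ?_)
    (measurable_ofReal_japaneseBracket_rpow (-b)) (fun x => ?_) (fun y => ?_)
  · rw [← ENNReal.ofReal_mul (Real.rpow_nonneg (japaneseBracket_pos y).le _),
      ← Real.rpow_add (japaneseBracket_pos y), neg_add_cancel, Real.rpow_zero, ENNReal.ofReal_one]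
  · simp_rw [mul_comm (ENNReal.ofReal (‖x - _‖ ^ (-α)))]
    exact (mul_le_mul_right (hK₁ x) _).trans (ofReal_japaneseBracket_rpow_mul_le x ht C₁)
  · simp_rw [norm_sub_rev _ y]
    exact (mul_le_mul_right (hK₂ y) _).trans (ofReal_japaneseBracket_rpow_mul_le y hs C₂)

theorem exists_integral_one_add_norm_sq_rpow_mul_norm_integral_norm_sub_rpow_smul_sq_le
    {G : Type*} [NormedAddCommGroup G] [NormedSpace ℝ G] {α a b s t : ℝ}
    (hα : 0 ≤ α) (hαd : α < finrank ℝ E) (ha : 0 ≤ a) (had : a < finrank ℝ E)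
    (hαa : finrank ℝ E < α + a) (hb : 0 ≤ b) (hbd : b < finrank ℝ E) (hαb : finrank ℝ E < α + b)
    (ht : 2 * t + (finrank ℝ E - α - a) ≤ -b) (hs : a + (finrank ℝ E - α - b) ≤ 2 * s) :
    ∃ C : ℝ, 0 ≤ C ∧ ∀ f : E → G, StronglyMeasurable f →
      Integrable (fun y => (1 + ‖y‖ ^ 2) ^ s * ‖f y‖ ^ 2) μ →
        (∀ᵐ x ∂μ, Integrable (fun y => ‖x - y‖ ^ (-α) • f y) μ) ∧
          ∫ x, (1 + ‖x‖ ^ 2) ^ t * ‖∫ y, ‖x - y‖ ^ (-α) • f y ∂μ‖ ^ 2 ∂μ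
            ≤ C * ∫ y, (1 + ‖y‖ ^ 2) ^ s * ‖f y‖ ^ 2 ∂μ := by
  obtain ⟨C, hC, hbound⟩ := exists_lintegral_one_add_norm_sq_rpow_mul_sq_lintegral_norm_sub_rpow_le
    μ hα hαd ha had hαa hb hbd hαb ht hs
  refine ⟨C.toReal, ENNReal.toReal_nonneg, fun f hf hfs => ?_⟩
  have hle : ∫⁻ x, ENNReal.ofReal ((1 + ‖x‖ ^ 2) ^ t) * (∫⁻ y, ‖‖x - y‖ ^ (-α) • f y‖ₑ ∂μ) ^ 2 ∂μ
      ≤ C * ENNReal.ofReal (∫ y, (1 + ‖y‖ ^ 2) ^ s * ‖f y‖ ^ 2 ∂μ) := by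
    simp only [enorm_smul,
      fun x y : E => Real.enorm_of_nonneg (Real.rpow_nonneg (norm_nonneg (x - y)) (-α))]
    refine (hbound _ hf.enorm).trans_eq ?_
    rw [ofReal_integral_eq_lintegral_ofReal hfs (ae_of_all _ fun y => by positivity)]
    refine congrArg _ (lintegral_congr fun y => ?_)
    rw [ENNReal.ofReal_mul (by positivity), ENNReal.ofReal_pow (norm_nonneg _), ofReal_norm]
  have hfin := (hle.trans_lt (ENNReal.mul_lt_top hC.lt_top ENNReal.ofReal_lt_top)).ne
  refine ⟨ae_integrable_of_lintegral_mul_sq_lintegral_enorm_ne_top ?_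
    (by fun_prop) (fun x => (ENNReal.ofReal_pos.2 (by positivity)).ne') hfin,
    (integral_mul_norm_integral_sq_le_toReal (fun x => by positivity) hfin).trans ?_⟩
  · exact ((measurable_fst.sub measurable_snd).norm.pow_const _).stronglyMeasurable.smul
      (hf.comp_measurable measurable_snd) |>.aestronglyMeasurable
  refine (ENNReal.toReal_mono (ENNReal.mul_ne_top hC ENNReal.ofReal_ne_top) hle).trans_eq ?_
  rw [ENNReal.toReal_mul, ENNReal.toReal_ofReal (integral_nonneg fun y => by positivity)]

end HaarMeasure

theorem kernel_boundedness_weighted_L2_J_zero_general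
    (N : ℕ) (hN3 : 3 ≤ N)
    (s t : ℝ) (hs : 1 / 2 < s) (ht : t < -(1 / 2)) (hts : t ≤ s - ((N : ℝ) + 1) / 2) :
    ∃ C : ℝ, 0 < C ∧
      ∀ f : EuclideanSpace ℝ (Fin N) → ℂ, Measurable f →
        Integrable (fun y => (1 + ‖y‖ ^ 2) ^ s * ‖f y‖ ^ 2) →
        (∀ᵐ x : EuclideanSpace ℝ (Fin N),
            Integrable (fun y => ‖x - y‖ ^ (1 - (N : ℝ)) • f y)) ∧
          (∫ x : EuclideanSpace ℝ (Fin N),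
              (1 + ‖x‖ ^ 2) ^ t *
                ‖∫ y : EuclideanSpace ℝ (Fin N), ‖x - y‖ ^ (1 - (N : ℝ)) • f y‖ ^ 2)
            ≤ C ^ 2 * ∫ y : EuclideanSpace ℝ (Fin N), (1 + ‖y‖ ^ 2) ^ s * ‖f y‖ ^ 2 := by
  have hd : (finrank ℝ (EuclideanSpace ℝ (Fin N)) : ℝ) = N := by simp
  have hN : (3 : ℝ) ≤ N := by exact_mod_cast hN3
  set b := min (1 / 2 - 2 * t) ((N : ℝ) - 1 / 2)
  have hb₁ : 1 < b := lt_min (by linarith) (by linarith)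
  have hb₂ : b ≤ 1 / 2 - 2 * t := min_le_left _ _
  have hb₃ : b ≤ N - 1 / 2 := min_le_right _ _
  have hb₄ : 5 / 2 - 2 * s ≤ b := le_min (by linarith) (by linarith)
  obtain ⟨C, hC, hbound⟩ :=
    exists_integral_one_add_norm_sq_rpow_mul_norm_integral_norm_sub_rpow_smul_sq_le (G := ℂ)
      (volume : Measure (EuclideanSpace ℝ (Fin N))) (α := N - 1) (a := 3 / 2) (b := b)
      (s := s) (t := t) (by linarith) (by linarith) (by norm_num) (by linarith) (by linarith)
      (by linarith) (by linarith) (by linarith) (by linarith) (by linarith)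
  simp only [neg_sub] at hbound
  refine ⟨C + 1, by positivity, fun f hf hfs => ?_⟩
  refine (hbound f hf.stronglyMeasurable hfs).imp_right fun h => h.trans ?_
  gcongr
  nlinarith

/-- The `J = 0` case of the kernel boundedness from the proof of Lemma 3.15: the integral
operator with kernel `|x - y|^(1-N)` is bounded from `L²_s(ℝ^N)` to `L²_t(ℝ^N)` for
`s > 1/2`, `t < -1/2` and `t ≤ s - (N+1)/2`. -/
theorem kernel_boundedness_weighted_L2_J_zero
    (N : ℕ) (hN3 : 3 ≤ N) (hNodd : Odd N)
    (s t : ℝ) (hs : 1 / 2 < s) (ht : t < -(1 / 2)) (hts : t ≤ s - ((N : ℝ) + 1) / 2) :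
    ∃ C : ℝ, 0 < C ∧
      ∀ f : EuclideanSpace ℝ (Fin N) → ℂ, Measurable f →
        Integrable (fun y => (1 + ‖y‖ ^ 2) ^ s * ‖f y‖ ^ 2) →
        (∀ᵐ x : EuclideanSpace ℝ (Fin N),
            Integrable (fun y => ‖x - y‖ ^ (1 - (N : ℝ)) • f y)) ∧
          (∫ x : EuclideanSpace ℝ (Fin N),
              (1 + ‖x‖ ^ 2) ^ t *
                ‖∫ y : EuclideanSpace ℝ (Fin N), ‖x - y‖ ^ (1 - (N : ℝ)) • f y‖ ^ 2)
            ≤ C ^ 2 * ∫ y : EuclideanSpace ℝ (Fin N), (1 + ‖y‖ ^ 2) ^ s * ‖f y‖ ^ 2 :=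
  kernel_boundedness_weighted_L2_J_zero_general N hN3 s t hs ht hts
end
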